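/- Let A be an f×f positive definite symmetric integer matrix with even diagonal entries, defining Q(x) = (1/2)x^T A x and B(x,y) = x^T A y. Fix linearly independent h_1,…,h_n ∈ ℤ^f, v ∈ ℂ^f, k ∈ ℕ, and define θ(τ, z) = Σ_{m ∈ ℤ^f} B(v,m)^k e^{2πi τ Q(m)} e^{2πi Σ_j z_j B(m,h_j)} for τ ∈ ℍ, z ∈ ℂ^n. If B(v,h_j)=0 for all j, then for all λ, μ ∈ ℤ^n: θ(τ, z + λτ + μ) = exp(−πi(G[λ]τ + 2 z^T G λ)) · θ(τ, z), where G is the Gram matrix (B(h_i,h_j)) and G[λ] = λ^T G λ. -/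

import Mathlib

open Complex Matrix

/-- Complex-valued bilinear pairing `B(v,m) = vᵀ A m` for `v ∈ ℂ^f`, `m ∈ ℤ^f`. -/
noncomputable def Bpair {f : ℕ} (A : Matrix (Fin f) (Fin f) ℤ)
    (v : Fin f → ℂ) (m : Fin f → ℤ) : ℂ :=
  ∑ i, ∑ j, v i * (A i j : ℂ) * (m j : ℂ)

/-- The theta series
`θ(τ,z) = Σ_{m∈ℤ^f} B(v,m)^k e^{2πiτQ(m)} e^{2πiΣ_j z_j B(m,h_j)}`
with `Q(m) = (1/2) mᵀ A m` (so `2πiτQ(m) = πiτ·mᵀAm`). -/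
noncomputable def thetaSeries {f n : ℕ} (A : Matrix (Fin f) (Fin f) ℤ)
    (v : Fin f → ℂ) (h : Fin n → (Fin f → ℤ)) (k : ℕ)
    (τ : ℂ) (z : Fin n → ℂ) : ℂ :=
  ∑' m : Fin f → ℤ,
    Bpair A v m ^ k *
      Complex.exp (Real.pi * I * τ * Bpair A ((↑) ∘ m) m) *
      Complex.exp (2 * Real.pi * I * ∑ j, z j * Bpair A ((↑) ∘ m) (h j))

open Real

/-! Shifting the summation variable `m ↦ m - L` with `L = ∑ lⱼ hⱼ` matches the series termwise
(reindexing a `tsum` along a bijection needs no convergence). Since `B(v, L) = 0` the polynomial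
factor is unchanged, and expanding `Q(m - L)` and `B(m - L, hⱼ)` with the symmetric form yields
the automorphy factor, up to `2πi` times the integer `∑ μⱼ B(m - L, hⱼ)`. -/

namespace LinearMap.BilinForm

variable {M : Type*} [AddCommGroup M] (β : LinearMap.BilinForm ℤ M) {n : ℕ} (h : Fin n → M)

lemma sum_sum_mul_apply_mul (c : Fin n → ℂ) (l : Fin n → ℤ) :
    ∑ i, ∑ j, c i * (β (h i) (h j) : ℂ) * l j = ∑ i, c i * β (h i) (∑ j, l j • h j) := by
  simp [map_sum, Finset.mul_sum, mul_comm, mul_left_comm]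

theorem exp_quadratic_shift (hβ : β.IsSymm) (τ : ℂ) (z : Fin n → ℂ) (l μ : Fin n → ℤ)
    (m : M) :
    let L := ∑ j, l j • h j
    exp (π * I * τ * β (m - L) (m - L)) *
        exp (2 * π * I * ∑ j, (z j + l j * τ + μ j) * β (m - L) (h j)) =
      exp (-(π * I) * ((∑ i, ∑ j, (l i : ℂ) * β (h i) (h j) * l j) * τ +
          2 * ∑ i, ∑ j, z i * β (h i) (h j) * l j)) *
        (exp (π * I * τ * β m m) * exp (2 * π * I * ∑ j, z j * β m (h j))) := by
  intro L
  have hsymm : ∀ x y, (β x y : ℂ) = β y x := fun x y => by rw [hβ.eq]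
  have hright : ∀ x, ∑ j, (l j : ℂ) * β x (h j) = β x L := fun x => by
    simp [L, map_sum]
  have hquad : (β (m - L) (m - L) : ℂ) = β m m - 2 * β m L + β L L := by
    simp only [map_sub, LinearMap.sub_apply]; push_cast; rw [hsymm L m]; ring
  have hlin : ∀ j, (β (m - L) (h j) : ℂ) = β m (h j) - β (h j) L := fun j => by
    simp only [map_sub, LinearMap.sub_apply]; push_cast; rw [hsymm L]
  -- the shift by `μ` only contributes `2πi N`
  set N : ℤ := ∑ j, μ j * β (m - L) (h j)
  have hsum : ∑ j, (z j + l j * τ + μ j) * (β (m - L) (h j) : ℂ) =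
      ∑ j, z j * β m (h j) - ∑ j, z j * β (h j) L + τ * (β m L - β L L) + N := by
    have hμ : (N : ℂ) = ∑ j, (μ j : ℂ) * β (m - L) (h j) := by push_cast [N]; rfl
    have hl : ∑ j, (l j : ℂ) * β (m - L) (h j) = β m L - β L L := by
      rw [hright]; simp only [map_sub, LinearMap.sub_apply]; push_cast; rfl
    have hterm : ∀ j, (z j + l j * τ + μ j) * (β (m - L) (h j) : ℂ) = z j * β m (h j) -
        z j * β (h j) L + τ * (l j * β (m - L) (h j)) + μ j * β (m - L) (h j) := fun j => by
      rw [hlin]; ring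
    simp only [hterm, Finset.sum_add_distrib, Finset.sum_sub_distrib, ← Finset.mul_sum, hl, hμ]
  have hgram : ∑ i, (l i : ℂ) * β (h i) L = β L L := by
    simp_rw [hsymm _ L]; exact hright L
  rw [sum_sum_mul_apply_mul, sum_sum_mul_apply_mul, hgram, ← Complex.exp_add, ← Complex.exp_add,
    ← Complex.exp_add, exp_eq_exp_iff_exists_int]
  refine ⟨N, ?_⟩
  rw [hquad, hsum]
  ring

end LinearMap.BilinForm

section Bpair

variable {f : ℕ} (A : Matrix (Fin f) (Fin f) ℤ)

lemma Bpair_intCast_eq_toBilin' (x y : Fin f → ℤ) :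
    Bpair A ((↑) ∘ x) y = (A.toBilin' x y : ℂ) := by
  simp [Bpair, Matrix.toBilin'_apply]

lemma Bpair_add_right (v : Fin f → ℂ) (x y : Fin f → ℤ) :
    Bpair A v (x + y) = Bpair A v x + Bpair A v y := by
  simp only [Bpair, Pi.add_apply, Int.cast_add, mul_add, Finset.sum_add_distrib]

lemma Bpair_sub_sum_zsmul_right {n : ℕ} {v : Fin f → ℂ} {h : Fin n → Fin f → ℤ}
    (hv : ∀ j, Bpair A v (h j) = 0) (m : Fin f → ℤ) (l : Fin n → ℤ) :
    Bpair A v (m - ∑ j, l j • h j) = Bpair A v m := by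
  let φ : (Fin f → ℤ) →+ ℂ := AddMonoidHom.mk' (Bpair A v) (Bpair_add_right A v)
  change φ (m - ∑ j, l j • h j) = φ m
  have hφ : ∀ j, φ (h j) = 0 := hv
  rw [map_sub, map_sum]
  simp only [map_zsmul, hφ, smul_zero, Finset.sum_const_zero, sub_zero]

end Bpair

theorem theta_elliptic_transformation_general {f n : ℕ}
    (A : Matrix (Fin f) (Fin f) ℤ) (hAsymm : Aᵀ = A)
    (h : Fin n → (Fin f → ℤ))
    (v : Fin f → ℂ) (k : ℕ)
    (hv : ∀ j, Bpair A v (h j) = 0)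
    (τ : ℂ) (z : Fin n → ℂ) (l μ : Fin n → ℤ) :
    thetaSeries A v h k τ (fun j => z j + (l j : ℂ) * τ + (μ j : ℂ)) =
      Complex.exp (-(Real.pi * I) *
          ((∑ i, ∑ j, (l i : ℂ) * Bpair A ((↑) ∘ h i) (h j) * (l j : ℂ)) * τ +
            2 * ∑ i, ∑ j, z i * Bpair A ((↑) ∘ h i) (h j) * (l j : ℂ))) *
        thetaSeries A v h k τ z := by
  unfold thetaSeries
  rw [← (Equiv.subRight (∑ j, l j • h j)).tsum_eq, ← tsum_mul_left]
  refine tsum_congr fun m => ?_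
  simp only [Equiv.subRight_apply, Bpair_sub_sum_zsmul_right A hv, Bpair_intCast_eq_toBilin']
  rw [mul_assoc, A.toBilin'.exp_quadratic_shift h (Matrix.isSymm_toBilin'_iff_isSymm.mpr hAsymm)]
  ring

theorem theta_elliptic_transformation {f n : ℕ}
    (A : Matrix (Fin f) (Fin f) ℤ) (hAsymm : Aᵀ = A)
    (hAeven : ∀ i, 2 ∣ A i i)
    (hApos : (A.map ((↑) : ℤ → ℝ)).PosDef)
    (h : Fin n → (Fin f → ℤ)) (hLI : LinearIndependent ℤ h)
    (v : Fin f → ℂ) (k : ℕ)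
    (hv : ∀ j, Bpair A v (h j) = 0)
    (τ : ℂ) (hτ : 0 < τ.im) (z : Fin n → ℂ) (l μ : Fin n → ℤ) :
    thetaSeries A v h k τ (fun j => z j + (l j : ℂ) * τ + (μ j : ℂ)) =
      Complex.exp (-(Real.pi * I) *
          ((∑ i, ∑ j, (l i : ℂ) * Bpair A ((↑) ∘ h i) (h j) * (l j : ℂ)) * τ +
            2 * ∑ i, ∑ j, z i * Bpair A ((↑) ∘ h i) (h j) * (l j : ℂ))) *
        thetaSeries A v h k τ z :=
  theta_elliptic_transformation_general A hAsymm h v k hv τ z l μ
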